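/- Let I = (𝔼, D, c, f) be a CMP instance whose objective f is of type product, and let E = {e_1,…,e_k} ⊆ 𝔼. Then ( (min_{l=1,…,k} { u'(I,e_l)/c(e_l) } + 1)^{1/k} − 1 ) · min_{l=1,…,k} c(e_l) ≤ u_b'(I,E). -/

import Mathlib

/-!
Write the perturbed costs as `c x + α x = c x * ρ x` with `ρ ≥ 1` and `ρ = 1` off `E`. With
`a = ∑ α` and `m = min_E c`, every factor satisfies `ρ ≤ a / m + 1 =: q`, so `∏_E ρ ≤ q ^ k`. If the
bound failed for `α`, then `c e * (q ^ k - 1) < u'(I,e)` for every `e ∈ E`. Compare the optimal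
solution `S₀` with a feasible `S`. If `S₀ ∩ E ⊆ S`, every extra factor of `S₀` also occurs in `S`.
Otherwise some `e ∈ S₀ ∩ E` is missing from `S`; raising `c e` by a bit more than
`c e * (q ^ k - 1)` keeps `S₀` optimal, which gives `q ^ k * ∏_{S₀} c ≤ ∏_S c` and absorbs the whole
perturbation `∏_{S₀} ρ ≤ q ^ k`. Either way `S₀` stays optimal, a contradiction.
-/

open scoped ENNReal BigOperators

/-- Objective type of a combinatorial minimization problem:
sum, product, or bottleneck. -/
inductive ObjType where
  | sum : ObjType
  | prod : ObjType
  | bottleneck : ObjType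
deriving DecidableEq

/-- The cost `f_c(S)` of a feasible solution `S` under cost function `c`:
the sum, the product, or the maximum (for nonempty `S`) of the element costs. -/
noncomputable def objCost {ι : Type*} (t : ObjType) (c : ι → ℝ) (S : Finset ι) : ℝ :=
  match t with
  | ObjType.sum => ∑ e ∈ S, c e
  | ObjType.prod => ∏ e ∈ S, c e
  | ObjType.bottleneck => if h : S.Nonempty then S.sup' h c else 0

/-- The optimal objective value `f(I)` of the instance with feasible set `D`. -/
noncomputable def optVal {ι : Type*} (t : ObjType) (c : ι → ℝ) (D : Finset (Finset ι)) : ℝ :=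
  if h : D.Nonempty then D.inf' h (objCost t c) else 0

/-- `S` is an optimal solution of the instance `(𝔼, D, c, f)`. -/
def isOpt {ι : Type*} (t : ObjType) (c : ι → ℝ) (D : Finset (Finset ι)) (S : Finset ι) : Prop :=
  S ∈ D ∧ objCost t c S = optVal t c D

/-- `0 ≤ a < maxdec(e)`, where `maxdec(e) = ∞` for sum/bottleneck objectives and
`maxdec(e) = c(e)` for the product objective. -/
def decOK {ι : Type*} (t : ObjType) (c : ι → ℝ) (e : ι) (a : ℝ) : Prop :=
  0 ≤ a ∧ (t = ObjType.prod → a < c e)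

/-- Extended single upper tolerance
`u'(I,e) = sup {α ≥ 0 : every optimal solution of I is optimal for I_{α,e}}` valued in `[0,∞]`. -/
noncomputable def uTol {ι : Type*} [DecidableEq ι] (t : ObjType) (c : ι → ℝ)
    (D : Finset (Finset ι)) (e : ι) : ℝ≥0∞ :=
  sSup (ENNReal.ofReal '' {a : ℝ | 0 ≤ a ∧
    ∀ S : Finset ι, isOpt t c D S →
      isOpt t (fun x => if x = e then c x + a else c x) D S})

/-- Extended regular set upper tolerance `u'(I,E)`, valued in `[0,∞]`. -/
noncomputable def uTolSet {ι : Type*} [DecidableEq ι] (t : ObjType) (c : ι → ℝ)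
    (D : Finset (Finset ι)) (E : Finset ι) : ℝ≥0∞ :=
  sSup (ENNReal.ofReal '' {a : ℝ |
    ∀ S : Finset ι, isOpt t c D S →
      ∃ α : ι → ℝ, (∀ x, 0 ≤ α x) ∧ (∀ x ∉ E, α x = 0) ∧
        a = ∑ x ∈ E, α x ∧ isOpt t (fun x => c x + α x) D S})

/-- Extended reverse set upper tolerance `u_b'(I,E)`, valued in `[0,∞]` (`inf ∅ = ∞`). -/
noncomputable def uTolSetRev {ι : Type*} [DecidableEq ι] (t : ObjType) (c : ι → ℝ)
    (D : Finset (Finset ι)) (E : Finset ι) : ℝ≥0∞ :=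
  sInf (ENNReal.ofReal '' {a : ℝ |
    ∃ S : Finset ι, isOpt t c D S ∧
      ∃ α : ι → ℝ, (∀ x, 0 ≤ α x) ∧ (∀ x ∉ E, α x = 0) ∧
        a = ∑ x ∈ E, α x ∧ ¬ isOpt t (fun x => c x + α x) D S})

/-- New single lower tolerance
`l'(I,e) = sup {α : 0 ≤ α < maxdec(e), f(I_{−α,e}) = f(I)}`, valued in `[0,∞]`. -/
noncomputable def lTol {ι : Type*} [DecidableEq ι] (t : ObjType) (c : ι → ℝ)
    (D : Finset (Finset ι)) (e : ι) : ℝ≥0∞ :=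
  sSup (ENNReal.ofReal '' {a : ℝ | decOK t c e a ∧
    optVal t (fun x => if x = e then c x - a else c x) D = optVal t c D})

/-- New regular set lower tolerance `l'(I,E)`, valued in `[0,∞]`. -/
noncomputable def lTolSet {ι : Type*} [DecidableEq ι] (t : ObjType) (c : ι → ℝ)
    (D : Finset (Finset ι)) (E : Finset ι) : ℝ≥0∞ :=
  sSup (ENNReal.ofReal '' {a : ℝ |
    ∃ α : ι → ℝ, (∀ x ∈ E, decOK t c x (α x)) ∧ (∀ x ∉ E, α x = 0) ∧
      a = ∑ x ∈ E, α x ∧ optVal t (fun x => c x - α x) D = optVal t c D})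

/-- New reverse set lower tolerance `l_b'(I,E)`, valued in `[0,∞]` (`inf ∅ = ∞`). -/
noncomputable def lTolSetRev {ι : Type*} [DecidableEq ι] (t : ObjType) (c : ι → ℝ)
    (D : Finset (Finset ι)) (E : Finset ι) : ℝ≥0∞ :=
  sInf (ENNReal.ofReal '' {a : ℝ |
    ∃ α : ι → ℝ, (∀ x ∈ E, decOK t c x (α x)) ∧ (∀ x ∉ E, α x = 0) ∧
      a = ∑ x ∈ E, α x ∧ optVal t (fun x => c x - α x) D < optVal t c D})

open Finset

theorem ENNReal.add_one_pow_lt_of_lt_rpow_sub_one {x y : ℝ≥0∞} {k : ℕ} (hk : k ≠ 0)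
    (h : x < (y + 1) ^ (1 / (k : ℝ)) - 1) : (x + 1) ^ k < y + 1 := by
  have h' := lt_tsub_iff_right.1 h
  rwa [one_div, ENNReal.lt_rpow_inv_iff (by positivity), ENNReal.rpow_natCast] at h'

theorem ENNReal.ofReal_mul_sub_one_lt {p r : ℝ} {u : ℝ≥0∞} (hp : 1 ≤ p) (hr : 0 < r)
    (h : ENNReal.ofReal p < u / ENNReal.ofReal r + 1) : ENNReal.ofReal (r * (p - 1)) < u := by
  rw [← sub_add_cancel p 1, ENNReal.ofReal_add (by linarith) zero_le_one, ENNReal.ofReal_one,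
    ENNReal.add_lt_add_iff_right ENNReal.one_ne_top,
    ENNReal.lt_div_iff_mul_lt (by simp [hr]) (Or.inl ENNReal.ofReal_ne_top)] at h
  rwa [mul_comm, ENNReal.ofReal_mul (by linarith)]

section
variable {ι : Type*} {t : ObjType} {c : ι → ℝ} {D : Finset (Finset ι)} {S₀ : Finset ι}

theorem isOpt_iff_forall_le :
    isOpt t c D S₀ ↔ S₀ ∈ D ∧ ∀ S ∈ D, objCost t c S₀ ≤ objCost t c S := by
  refine ⟨fun ⟨hS₀, hopt⟩ => ⟨hS₀, fun S hS => ?_⟩, fun ⟨hS₀, hle⟩ => ⟨hS₀, ?_⟩⟩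
  · rw [hopt, optVal, dif_pos ⟨S₀, hS₀⟩]
    exact inf'_le _ hS
  · rw [optVal, dif_pos ⟨S₀, hS₀⟩]
    exact le_antisymm (le_inf' _ _ hle) (inf'_le _ hS₀)

theorem prod_add_div_le_pow {α : ι → ℝ} {E : Finset ι} {a m : ℝ} (hm : 0 < m)
    (hcm : ∀ x ∈ E, m ≤ c x) (hα : ∀ x ∈ E, 0 ≤ α x) (hαa : ∀ x ∈ E, α x ≤ a) :
    ∏ x ∈ E, (c x + α x) / c x ≤ (a / m + 1) ^ E.card := by
  rw [← prod_const]
  refine prod_le_prod (fun x hx => ?_) fun x hx => ?_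
  · exact div_nonneg (by linarith [hcm x hx, hα x hx]) (hm.le.trans (hcm x hx))
  · have hcx := hm.trans_le (hcm x hx)
    have : α x / c x ≤ a / m := calc
      α x / c x ≤ a / c x := by gcongr; exact hαa x hx
      _ ≤ a / m := div_le_div_of_nonneg_left ((hα x hx).trans (hαa x hx)) hm (hcm x hx)
    rw [add_div, div_self hcx.ne']
    linarith

variable [DecidableEq ι]

theorem prod_le_prod_of_inter_subset {ρ : ι → ℝ} {E S : Finset ι} (hρ : ∀ x, 1 ≤ ρ x)
    (hρE : ∀ x ∉ E, ρ x = 1) (h : S₀ ∩ E ⊆ S) : ∏ x ∈ S₀, ρ x ≤ ∏ x ∈ S, ρ x :=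
  calc ∏ x ∈ S₀, ρ x = ∏ x ∈ S₀ ∩ E, ρ x :=
        (prod_subset inter_subset_left fun x hx hxE =>
          hρE x fun hx' => hxE (mem_inter.2 ⟨hx, hx'⟩)).symm
    _ ≤ ∏ x ∈ S, ρ x :=
        prod_le_prod_of_subset_of_one_le h (fun x _ => zero_le_one.trans (hρ x)) fun x _ _ => hρ x

theorem exists_lt_of_ofReal_lt_uTol {e : ι} {x : ℝ} (h : ENNReal.ofReal x < uTol t c D e) :
    ∃ β, x < β ∧ ∀ S, isOpt t c D S → isOpt t (fun y => if y = e then c y + β else c y) D S := by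
  obtain ⟨_, ⟨β, ⟨-, hβ⟩, rfl⟩, hlt⟩ := lt_sSup_iff.1 h
  exact ⟨β, (ENNReal.ofReal_lt_ofReal_iff'.1 hlt).1, hβ⟩

theorem mul_prod_le_prod_of_lt_uTol (hc : ∀ x, 0 ≤ c x) (hS₀ : isOpt .prod c D S₀)
    {e : ι} (he : e ∈ S₀) {S : Finset ι} (hS : S ∈ D) (heS : e ∉ S) {r : ℝ}
    (hr : ENNReal.ofReal (c e * (r - 1)) < uTol .prod c D e) :
    r * ∏ x ∈ S₀, c x ≤ ∏ x ∈ S, c x := by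
  obtain ⟨β, hβ, hopt⟩ := exists_lt_of_ofReal_lt_uTol hr
  have hle := (isOpt_iff_forall_le.1 (hopt S₀ hS₀)).2 S hS
  simp only [objCost] at hle
  rw [← mul_prod_erase S₀ _ he, if_pos rfl,
    prod_congr rfl fun x hx => if_neg (ne_of_mem_erase hx),
    prod_congr rfl fun x hx => if_neg (ne_of_mem_of_not_mem hx heS)] at hle
  calc r * ∏ x ∈ S₀, c x = r * c e * ∏ x ∈ S₀.erase e, c x := by
        rw [← mul_prod_erase S₀ _ he, mul_assoc]
    _ ≤ (c e + β) * ∏ x ∈ S₀.erase e, c x :=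
        mul_le_mul_of_nonneg_right (by linarith) (prod_nonneg fun x _ => hc x)
    _ ≤ ∏ x ∈ S, c x := hle

theorem isOpt_prod_add_of_lt_uTol {α : ι → ℝ} {E : Finset ι} {P : ℝ} (hc : ∀ x, 0 < c x)
    (hα : ∀ x, 0 ≤ α x) (hαE : ∀ x ∉ E, α x = 0) (hS₀ : isOpt .prod c D S₀)
    (hP : ∏ x ∈ E, (c x + α x) / c x ≤ P)
    (hu : ∀ e ∈ E, ENNReal.ofReal (c e * (P - 1)) < uTol .prod c D e) :
    isOpt .prod (fun x => c x + α x) D S₀ := by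
  set ρ := fun x => (c x + α x) / c x
  have hρ : ∀ x, 1 ≤ ρ x := fun x => (one_le_div (hc x)).2 (le_add_of_nonneg_right (hα x))
  have hρE : ∀ x ∉ E, ρ x = 1 := fun x hx => by simp [ρ, hαE x hx, (hc x).ne']
  have hsplit : ∀ T : Finset ι, ∏ x ∈ T, (c x + α x) = (∏ x ∈ T, c x) * ∏ x ∈ T, ρ x := fun T => by
    rw [← prod_mul_distrib]
    exact prod_congr rfl fun x _ => (mul_div_cancel₀ _ (hc x).ne').symm
  have hcpos : ∀ T : Finset ι, 0 < ∏ x ∈ T, c x := fun T => prod_pos fun x _ => hc x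
  refine isOpt_iff_forall_le.2 ⟨hS₀.1, fun S hS => ?_⟩
  have hopt := (isOpt_iff_forall_le.1 hS₀).2 S hS
  simp only [objCost] at hopt ⊢
  rw [hsplit, hsplit]
  by_cases hsub : S₀ ∩ E ⊆ S
  · exact mul_le_mul hopt (prod_le_prod_of_inter_subset hρ hρE hsub)
      (prod_nonneg fun x _ => zero_le_one.trans (hρ x)) (hcpos S).le
  · obtain ⟨e, he, heS⟩ := not_subset.1 hsub
    obtain ⟨heS₀, heE⟩ := mem_inter.1 he
    calc (∏ x ∈ S₀, c x) * ∏ x ∈ S₀, ρ x ≤ (∏ x ∈ S₀, c x) * P := by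
          refine mul_le_mul_of_nonneg_left ?_ (hcpos S₀).le
          exact (prod_le_prod_of_inter_subset hρ hρE inter_subset_right).trans hP
      _ ≤ ∏ x ∈ S, c x := by
          rw [mul_comm]
          exact mul_prod_le_prod_of_lt_uTol (fun x => (hc x).le) hS₀ heS₀ hS heS (hu e heE)
      _ ≤ (∏ x ∈ S, c x) * ∏ x ∈ S, ρ x :=
          le_mul_of_one_le_right (hcpos S).le (one_le_prod fun x _ => hρ x)

end

theorem urv_prod_lower_bound_general {ι : Type*} [DecidableEq ι]
    (c : ι → ℝ) (D : Finset (Finset ι))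
    (hpos : ∀ x, 0 < c x)
    (E : Finset ι) (hE : E.Nonempty) :
    (((E.inf fun e => uTol ObjType.prod c D e / ENNReal.ofReal (c e)) + 1)
        ^ (1 / (E.card : ℝ)) - 1) * (E.inf fun e => ENNReal.ofReal (c e))
      ≤ uTolSetRev ObjType.prod c D E := by
  obtain ⟨m, hmE, hm⟩ := E.exists_min_image c hE
  have hinf : (E.inf fun e => ENNReal.ofReal (c e)) = ENNReal.ofReal (c m) :=
    le_antisymm (inf_le hmE) (Finset.le_inf fun e he => ENNReal.ofReal_le_ofReal (hm e he))
  rw [hinf]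
  refine le_sInf ?_
  rintro _ ⟨a, ⟨S₀, hS₀, α, hα, hαE, rfl, hnot⟩, rfl⟩
  have hdiv : 0 ≤ (∑ x ∈ E, α x) / c m := div_nonneg (sum_nonneg fun x _ => hα x) (hpos m).le
  set q := (∑ x ∈ E, α x) / c m + 1
  refine le_of_not_gt fun hlt => hnot <| isOpt_prod_add_of_lt_uTol hpos hα hαE hS₀
    (prod_add_div_le_pow (hpos m) hm (fun x _ => hα x)
      fun x hx => single_le_sum (fun y _ => hα y) hx) fun e he => ?_
  have hq_eq : ENNReal.ofReal (q ^ E.card)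
      = (ENNReal.ofReal (∑ x ∈ E, α x) / ENNReal.ofReal (c m) + 1) ^ E.card := by
    rw [ENNReal.ofReal_pow (by positivity), ENNReal.ofReal_add hdiv zero_le_one,
      ENNReal.ofReal_div_of_pos (hpos m), ENNReal.ofReal_one]
  have hqk : ENNReal.ofReal (q ^ E.card) < _ + 1 := hq_eq ▸
    ENNReal.add_one_pow_lt_of_lt_rpow_sub_one hE.card_pos.ne' (ENNReal.div_lt_of_lt_mul hlt)
  exact ENNReal.ofReal_mul_sub_one_lt (one_le_pow₀ (le_add_of_nonneg_left hdiv)) (hpos e)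
    (hqk.trans_le (by gcongr; exact inf_le he))

/-- Theorem (reverse set upper tolerance, product case):
`((min_l {u'(I,e_l)/c(e_l)} + 1)^{1/k} − 1) · min_l c(e_l) ≤ u_b'(I,E)`,
with arithmetic in `[0,∞]`. -/
theorem urv_prod_lower_bound {ι : Type*} [Fintype ι] [DecidableEq ι]
    (c : ι → ℝ) (D : Finset (Finset ι))
    (hD : D.Nonempty) (hSne : ∀ S ∈ D, S.Nonempty)
    (hpos : ∀ x, 0 < c x)
    (E : Finset ι) (hE : E.Nonempty) :
    (((E.inf fun e => uTol ObjType.prod c D e / ENNReal.ofReal (c e)) + 1)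
        ^ (1 / (E.card : ℝ)) - 1) * (E.inf fun e => ENNReal.ofReal (c e))
      ≤ uTolSetRev ObjType.prod c D E :=
  urv_prod_lower_bound_general c D hpos E hE
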